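/- Let R be an associative unital ℂ-algebra, let f, g, a, b ∈ R and let x ∈ R be central (or a complex scalar). Define the 2×2 matrices over R: A₁ = [[0,2],[0,0]], A₀ = [[−2f, 2f²−g+x+(2/3)b],[−2, 2f]], A₋₁ = [[(2/3)bf+(1/2)a, (1/3)bg−(2/3)bf²−(1/3)xb−(4/9)b²],[−g+(2/3)b, −(fg−gf)−(4/3)bf+(2/3)fb−(1/2)a]], and C₁ = [[0,1],[0,0]], C₂ = 0, C₃ = [[−2, 2f],[0,0]], C₄ = [[(2/3)b−g, −(fg−gf)−(4/3)bf+(2/3)fb−(1/2)a],[0,0]]. Then C₁A₁ = 0, C₂A₋₁ = 0, C₃ = C₁A₀ + C₂A₁ and C₄ = C₁A₋₁ + C₂A₀; equivalently (C₃μ + C₄) − (C₁μ + C₂)(A₁μ + A₀ + A₋₁μ⁻¹) = 0 identically in a central invertible indeterminate μ. Moreover, the resulting matrix C(λ) = C₁λ − C₃ = [[2, λ−2f],[0,0]] has identically zero second row, hence is not invertible when R is nontrivial (the Jimbo–Miwa-type pair for P₂² is degenerate). -/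
import Mathlib


/- STATEMENT 9: the rewriting of the HTW₂² linear problem: the matrices C₁,…,C₄ solve
equation (Ccond), equivalently (C₃μ + C₄) − (C₁μ + C₂)(A₁μ + A₀ + A₋₁μ⁻¹) = 0
identically in μ; moreover C(λ) = C₁λ − C₃ = [[2, λ−2f],[0,0]] has identically zero
second row, hence is not invertible when R is nontrivial (the Jimbo–Miwa-type pair
for P₂² is degenerate). -/

noncomputable section

variable (R : Type*) [Ring R] [Algebra ℂ R]

def HTW22A1 : Matrix (Fin 2) (Fin 2) R := !![0, 2; 0, 0]

def HTW22A0 (f g b x : R) : Matrix (Fin 2) (Fin 2) R :=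
  !![-2 * f, 2 * f ^ 2 - g + x + (2 / 3 : ℂ) • b; -2, 2 * f]

def HTW22Am1 (f g a b x : R) : Matrix (Fin 2) (Fin 2) R :=
  !![(2 / 3 : ℂ) • (b * f) + (1 / 2 : ℂ) • a,
     (1 / 3 : ℂ) • (b * g) - (2 / 3 : ℂ) • (b * f ^ 2) - (1 / 3 : ℂ) • (x * b)
       - (4 / 9 : ℂ) • (b ^ 2);
     -g + (2 / 3 : ℂ) • b,
     -(f * g - g * f) - (4 / 3 : ℂ) • (b * f) + (2 / 3 : ℂ) • (f * b)
       - (1 / 2 : ℂ) • a]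

def HTW22C1 : Matrix (Fin 2) (Fin 2) R := !![0, 1; 0, 0]

def HTW22C2 : Matrix (Fin 2) (Fin 2) R := 0

def HTW22C3 (f : R) : Matrix (Fin 2) (Fin 2) R := !![-2, 2 * f; 0, 0]

def HTW22C4 (f g a b : R) : Matrix (Fin 2) (Fin 2) R :=
  !![(2 / 3 : ℂ) • b - g,
     -(f * g - g * f) - (4 / 3 : ℂ) • (b * f) + (2 / 3 : ℂ) • (f * b)
       - (1 / 2 : ℂ) • a;
     0, 0]

theorem HTW22_Ccond_degenerate (f g a b x : R) (hx : ∀ r : R, x * r = r * x) :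
    HTW22C1 R * HTW22A1 R = 0 ∧
    HTW22C2 R * HTW22Am1 R f g a b x = 0 ∧
    HTW22C3 R f = HTW22C1 R * HTW22A0 R f g b x + HTW22C2 R * HTW22A1 R ∧
    HTW22C4 R f g a b = HTW22C1 R * HTW22Am1 R f g a b x
      + HTW22C2 R * HTW22A0 R f g b x ∧
    (∀ μ : ℂ, μ ≠ 0 →
      (μ • HTW22C3 R f + HTW22C4 R f g a b) -
        (μ • HTW22C1 R + HTW22C2 R) *
          (μ • HTW22A1 R + HTW22A0 R f g b x + μ⁻¹ • HTW22Am1 R f g a b x) = 0) ∧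
    (∀ lam : ℂ,
      lam • HTW22C1 R - HTW22C3 R f = !![(2 : R), algebraMap ℂ R lam - 2 * f; 0, 0] ∧
      (∀ j : Fin 2, (lam • HTW22C1 R - HTW22C3 R f) 1 j = 0) ∧
      (Nontrivial R →
        ¬ ∃ Cinv : Matrix (Fin 2) (Fin 2) R,
          (lam • HTW22C1 R - HTW22C3 R f) * Cinv = 1 ∧
          Cinv * (lam • HTW22C1 R - HTW22C3 R f) = 1)) := by
  have h1 : HTW22C1 R * HTW22A1 R = 0 := by
    ext i j
    fin_cases i <;> fin_cases j <;>
      simp [HTW22C1, HTW22A1, Matrix.mul_apply, Fin.sum_univ_two]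
  have h3' : HTW22C1 R * HTW22A0 R f g b x = HTW22C3 R f := by
    ext i j
    fin_cases i <;> fin_cases j <;>
      simp [HTW22C1, HTW22A0, HTW22C3, Matrix.mul_apply, Fin.sum_univ_two]
  have h4' : HTW22C1 R * HTW22Am1 R f g a b x = HTW22C4 R f g a b := by
    ext i j
    fin_cases i <;> fin_cases j <;>
      simp [HTW22C1, HTW22Am1, HTW22C4, Matrix.mul_apply, Fin.sum_univ_two] <;> abel
  refine ⟨h1, by simp [HTW22C2], by simp [HTW22C2, h3'], by simp [HTW22C2, h4'], ?_, ?_⟩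
  · intro μ hμ
    have : (μ • HTW22C1 R + HTW22C2 R) *
        (μ • HTW22A1 R + HTW22A0 R f g b x + μ⁻¹ • HTW22Am1 R f g a b x)
        = μ • HTW22C3 R f + HTW22C4 R f g a b := by
      simp only [HTW22C2, add_zero, Matrix.smul_mul, mul_add, Matrix.mul_smul, h1,
        smul_zero, zero_add, h3', h4', smul_smul, mul_inv_cancel₀ hμ, inv_mul_cancel₀ hμ, one_smul]
    rw [this, sub_self]
  · intro lam
    have hC : lam • HTW22C1 R - HTW22C3 R f
        = !![(2 : R), algebraMap ℂ R lam - 2 * f; 0, 0] := by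
      ext i j
      fin_cases i <;> fin_cases j <;>
        simp [HTW22C1, HTW22C3, Algebra.algebraMap_eq_smul_one]
    refine ⟨hC, ?_, ?_⟩
    · intro j
      rw [hC]
      fin_cases j <;> simp
    · rintro hnt ⟨Cinv, hCi, -⟩
      have h0 : ((lam • HTW22C1 R - HTW22C3 R f) * Cinv) 1 1 = 0 := by
        rw [hC]
        simp [Matrix.mul_apply, Fin.sum_univ_two]
      rw [hCi] at h0
      simp at h0
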